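/- arXiv:2207.01735 — 3 statements merged into one kernel-verified Lean document; each statement's English description precedes it below -/
import Mathlib

section
/- Let k be a field of characteristic zero, m ≥ 1, w : Fin m → ℕ a system of weights, and let G ∈ k[x_1,…,x_m] be a nonzero polynomial that is weighted homogeneous of degree d ≥ 1 with respect to w. Then the module of logarithmic vector fields decomposes as an internal direct sum Der(−log X) = Der(−log G) ⊕ k[x]·ε, where ε = (w_1·x_1, …, w_m·x_m) is the Euler field. Concretely: (i) every ξ ∈ Der(−log X) can be written as ξ = η + g·ε with η ∈ Der(−log G) and g ∈ k[x_1,…,x_m]; and (ii) if g·ε ∈ Der(−log G) for some g ∈ k[x_1,…,x_m], then g = 0 (so Der(−log G) ∩ k[x]·ε = 0). -/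
open MvPolynomial

/-!
Everything follows from Euler's identity `∑ i, wᵢ xᵢ ∂ᵢG = d • G`. If `∑ i, ξᵢ ∂ᵢG = c G`, then
subtracting `(c / d) ε` from `ξ` lands in `Der(−log G)`; and `∑ i, g εᵢ ∂ᵢG = g d G` vanishes only
for `g = 0` because `k[x]` is a domain and `d G ≠ 0`.
-/

section LogarithmicVectorFields

variable {R ι : Type*} [CommRing R] [Fintype ι] {ε D : ι → R} {G u : R}

theorem exists_eq_add_mul_of_sum_mul_mem_span (hu : IsUnit u) (hε : ∑ i, ε i * D i = u * G)
    {ξ : ι → R} (hξ : ∑ i, ξ i * D i ∈ Ideal.span {G}) :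
    ∃ (η : ι → R) (g : R), ∑ i, η i * D i = 0 ∧ ∀ i, ξ i = η i + g * ε i := by
  obtain ⟨c, hc⟩ := Ideal.mem_span_singleton'.mp hξ
  obtain ⟨v, rfl⟩ := hu
  refine ⟨fun i => ξ i - (↑v⁻¹ * c) * ε i, ↑v⁻¹ * c, ?_, fun i => by ring⟩
  calc ∑ i, (ξ i - ↑v⁻¹ * c * ε i) * D i
      = ∑ i, ξ i * D i - ↑v⁻¹ * c * ∑ i, ε i * D i := by
        simp only [sub_mul, Finset.sum_sub_distrib, Finset.mul_sum, mul_assoc]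
    _ = 0 := by rw [hε, ← hc]; linear_combination (-(c * G)) * v.inv_mul

theorem eq_zero_of_sum_mul_mul_eq_zero [NoZeroDivisors R] (hu : u ≠ 0) (hG : G ≠ 0)
    (hε : ∑ i, ε i * D i = u * G) {g : R} (hg : ∑ i, g * ε i * D i = 0) : g = 0 := by
  have : g * (u * G) = 0 := by
    rw [← hε, Finset.mul_sum]
    simpa only [mul_assoc] using hg
  simpa [hu, hG] using this

end LogarithmicVectorFields

theorem der_log_decomposition_general {k : Type*} [Field k] [CharZero k] {m : ℕ}
    (w : Fin m → ℕ) (G : MvPolynomial (Fin m) k) (hG0 : G ≠ 0) (d : ℕ) (hd : 1 ≤ d)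
    (hG : G.IsWeightedHomogeneous w d) :
    (∀ ξ : Fin m → MvPolynomial (Fin m) k,
        (∑ i, ξ i * pderiv i G) ∈ Ideal.span {G} →
        ∃ (η : Fin m → MvPolynomial (Fin m) k) (g : MvPolynomial (Fin m) k),
          (∑ i, η i * pderiv i G) = 0 ∧
          ∀ i, ξ i = η i + g * ((w i : MvPolynomial (Fin m) k) * X i))
    ∧ (∀ g : MvPolynomial (Fin m) k,
        (∑ i, (g * ((w i : MvPolynomial (Fin m) k) * X i)) * pderiv i G) = 0 → g = 0) := by
  have hd0 : (d : k) ≠ 0 := Nat.cast_ne_zero.mpr (by omega)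
  have euler : ∑ i, ((w i : MvPolynomial (Fin m) k) * X i) * pderiv i G = C (d : k) * G := by
    simpa only [nsmul_eq_mul, mul_assoc, map_natCast] using hG.sum_weight_X_mul_pderiv
  exact ⟨fun ξ => exists_eq_add_mul_of_sum_mul_mem_span (hd0.isUnit.map C) euler,
    fun g => eq_zero_of_sum_mul_mul_eq_zero (C_ne_zero.mpr hd0) hG0 euler⟩

/-- For a nonzero weighted homogeneous polynomial `G` of degree `d ≥ 1` over a field of
characteristic zero, the module of logarithmic vector fields decomposes as
`Der(−log X) = Der(−log G) ⊕ k[x]·ε`, where `ε = (w₁·x₁, …, w_m·x_m)` is the Euler field: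
(i) every `ξ` with `∑ i, ξᵢ·∂ᵢG ∈ ⟨G⟩` is of the form `ξ = η + g·ε` with `∑ i, ηᵢ·∂ᵢG = 0`;
(ii) if `g·ε` satisfies `∑ i, g·εᵢ·∂ᵢG = 0`, then `g = 0`. -/
theorem der_log_decomposition {k : Type*} [Field k] [CharZero k] {m : ℕ} (hm : 1 ≤ m)
    (w : Fin m → ℕ) (G : MvPolynomial (Fin m) k) (hG0 : G ≠ 0) (d : ℕ) (hd : 1 ≤ d)
    (hG : G.IsWeightedHomogeneous w d) :
    (∀ ξ : Fin m → MvPolynomial (Fin m) k,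
        (∑ i, ξ i * pderiv i G) ∈ Ideal.span {G} →
        ∃ (η : Fin m → MvPolynomial (Fin m) k) (g : MvPolynomial (Fin m) k),
          (∑ i, η i * pderiv i G) = 0 ∧
          ∀ i, ξ i = η i + g * ((w i : MvPolynomial (Fin m) k) * X i))
    ∧ (∀ g : MvPolynomial (Fin m) k,
        (∑ i, (g * ((w i : MvPolynomial (Fin m) k) * X i)) * pderiv i G) = 0 → g = 0) :=
  der_log_decomposition_general w G hG0 d hd hG
end

section
/- Let k be a field of characteristic zero, m ≥ 1, w : Fin m → ℕ a system of weights with w_m ≥ 1 (the last variable x_m playing the role of the deformation parameter s), and let G ∈ k[x_1,…,x_m] be a nonzero polynomial that is weighted homogeneous of degree d ≥ 1 with respect to w. Then the two ideals of k[x_1,…,x_m] obtained by projecting logarithmic vector fields to their last component satisfy: {ξ_m : ξ ∈ Der(−log X)} = {ξ_m : ξ ∈ Der(−log G)} + ⟨x_m⟩, where ⟨x_m⟩ is the principal ideal generated by the last variable. (This is the identity dπ(Der(−log X)) = dπ(Der(−log G)) + (s) = FT(π,G) + (s) for π the projection to the parameter.) -/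
/-!
Euler's identity `∑ wᵢ xᵢ ∂ᵢG = d·G` says that the Euler field `ε = (wᵢ xᵢ)ᵢ` lies in
`Der(−log X)` with `ε(G) = d·G`. So if `ξ(G) = p·G`, then `ξ - (p/d)·ε ∈ Der(−log G)` and
its last component differs from `ξₘ` by a multiple of `xₘ`; conversely, adding
`(q/wₘ)·ε` to `ξ ∈ Der(−log G)` adds `q·xₘ` to the last component. Dividing by `d` and `wₘ`
is where characteristic zero and `d, wₘ ≥ 1` enter.
-/

open MvPolynomial

namespace MvPolynomial

variable {σ R : Type*}

noncomputable def eulerField [CommSemiring R] (w : σ → ℕ) (i : σ) : MvPolynomial σ R :=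
  (w i : MvPolynomial σ R) * X i

theorem C_inv_natCast_mul_natCast {k : Type*} [Field k] [CharZero k] {n : ℕ} (hn : n ≠ 0) :
    C (n : k)⁻¹ * (n : MvPolynomial σ k) = 1 := by
  rw [← map_natCast (C : k →+* MvPolynomial σ k), ← C_mul,
    inv_mul_cancel₀ (Nat.cast_ne_zero.mpr hn), C_1]

theorem IsWeightedHomogeneous.sum_add_mul_eulerField_mul_pderiv [Fintype σ] [CommSemiring R]
    {w : σ → ℕ} {d : ℕ} {G : MvPolynomial σ R} (hG : G.IsWeightedHomogeneous w d)
    (ξ : σ → MvPolynomial σ R) (a : MvPolynomial σ R) :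
    ∑ i, (ξ i + a * eulerField w i) * pderiv i G = ∑ i, ξ i * pderiv i G + a * d * G := by
  have euler : ∑ i, (w i : MvPolynomial σ R) * (X i * pderiv i G) = d * G := by
    simpa only [nsmul_eq_mul] using hG.sum_weight_X_mul_pderiv
  simp only [eulerField, add_mul, Finset.sum_add_distrib, mul_assoc, ← Finset.mul_sum, euler]

end MvPolynomial

theorem last_component_ideal_eq_general {k : Type*} [Field k] [CharZero k] {n : ℕ}
    (w : Fin (n + 1) → ℕ) (hw : 1 ≤ w (Fin.last n))
    (G : MvPolynomial (Fin (n + 1)) k) (d : ℕ) (hd : 1 ≤ d)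
    (hG : G.IsWeightedHomogeneous w d) :
    {h : MvPolynomial (Fin (n + 1)) k |
        ∃ ξ : Fin (n + 1) → MvPolynomial (Fin (n + 1)) k,
          (∑ i, ξ i * pderiv i G) ∈ Ideal.span {G} ∧ ξ (Fin.last n) = h}
    = {h : MvPolynomial (Fin (n + 1)) k |
        ∃ (ξ : Fin (n + 1) → MvPolynomial (Fin (n + 1)) k)
          (q : MvPolynomial (Fin (n + 1)) k),
          (∑ i, ξ i * pderiv i G) = 0 ∧ h = ξ (Fin.last n) + q * X (Fin.last n)} := by
  have hd' : C (d : k)⁻¹ * (d : MvPolynomial (Fin (n + 1)) k) = 1 :=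
    C_inv_natCast_mul_natCast (by omega)
  have hw' : C (w (Fin.last n) : k)⁻¹ * (w (Fin.last n) : MvPolynomial (Fin (n + 1)) k) = 1 :=
    C_inv_natCast_mul_natCast (by omega)
  ext h
  constructor
  · rintro ⟨ξ, hmem, rfl⟩
    obtain ⟨p, hp⟩ := Ideal.mem_span_singleton'.mp hmem
    set c := C (d : k)⁻¹ * p
    refine ⟨fun i => ξ i + -c * eulerField w i, c * w (Fin.last n), ?_, ?_⟩
    · rw [hG.sum_add_mul_eulerField_mul_pderiv, ← hp]
      linear_combination (-p * G) * hd'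
    · simp only [eulerField]
      ring
  · rintro ⟨ξ, q, hξ, rfl⟩
    refine ⟨fun i => ξ i + C (w (Fin.last n) : k)⁻¹ * q * eulerField w i, ?_, ?_⟩
    · rw [hG.sum_add_mul_eulerField_mul_pderiv, hξ, zero_add]
      exact Ideal.mul_mem_left _ _ (Ideal.mem_span_singleton_self G)
    · simp only [eulerField]
      linear_combination (q * X (Fin.last n)) * hw'

/-- For a nonzero weighted homogeneous polynomial `G` (degree `d ≥ 1`, last weight `≥ 1`)
over a field of characteristic zero, the ideals of last components of logarithmic vector
fields satisfy `dπ(Der(−log X)) = dπ(Der(−log G)) + (x_m)`, i.e. `h` is the last component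
of some `ξ` with `∑ i, ξᵢ·∂ᵢG ∈ ⟨G⟩` iff `h = ξ'_m + q·x_m` for some `ξ'` with
`∑ i, ξ'ᵢ·∂ᵢG = 0` and some `q`. -/
theorem last_component_ideal_eq {k : Type*} [Field k] [CharZero k] {n : ℕ}
    (w : Fin (n + 1) → ℕ) (hw : 1 ≤ w (Fin.last n))
    (G : MvPolynomial (Fin (n + 1)) k) (hG0 : G ≠ 0) (d : ℕ) (hd : 1 ≤ d)
    (hG : G.IsWeightedHomogeneous w d) :
    {h : MvPolynomial (Fin (n + 1)) k |
        ∃ ξ : Fin (n + 1) → MvPolynomial (Fin (n + 1)) k,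
          (∑ i, ξ i * pderiv i G) ∈ Ideal.span {G} ∧ ξ (Fin.last n) = h}
    = {h : MvPolynomial (Fin (n + 1)) k |
        ∃ (ξ : Fin (n + 1) → MvPolynomial (Fin (n + 1)) k)
          (q : MvPolynomial (Fin (n + 1)) k),
          (∑ i, ξ i * pderiv i G) = 0 ∧ h = ξ (Fin.last n) + q * X (Fin.last n)} :=
  last_component_ideal_eq_general w hw G d hd hG
end

section
/- Local generators of the failure-of-transversality ideal FT(π,G): identify ℂ^m with Fin m → ℂ, let G : ℂ^m → ℂ be analytic at a point p, let π be the projection onto the last coordinate (the deformation parameter s), and suppose ∂_mG(p) ≠ 0. Then for a function h : ℂ^m → ℂ analytic at p, the following are equivalent: (i) there is a local relation ξ for G at p whose last component agrees with h on a neighbourhood of p; (ii) there exist functions a_1, …, a_{m−1} analytic at p and a neighbourhood of p on which h = ∑_{i=1}^{m−1} a_i·∂_iG. In other words, near such a point p the ideal FT(π,G) = dπ(Der(−log G)) is generated by the partial derivatives ∂_1G, …, ∂_{m−1}G. -/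
open Filter

/-- The `i`-th partial derivative `∂ᵢG : x ↦ fderiv ℂ G x (eᵢ)` of `G : ℂ^m → ℂ`. -/
noncomputable def partialDeriv' (m : ℕ) (G : (Fin m → ℂ) → ℂ) (i : Fin m) :
    (Fin m → ℂ) → ℂ :=
  fun x => fderiv ℂ G x (Pi.single i 1)

/-- A local relation for `G` at `p` (a local section of `Der(−log G)`): a tuple
`ξ = (ξ_1, …, ξ_m)` of functions analytic at `p` such that `∑ i, ξᵢ·∂ᵢG` vanishes on a
neighbourhood of `p`. -/
def IsLocalRelation (m : ℕ) (G : (Fin m → ℂ) → ℂ) (p : Fin m → ℂ)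
    (ξ : Fin m → (Fin m → ℂ) → ℂ) : Prop :=
  (∀ i, AnalyticAt ℂ (ξ i) p) ∧
    ∀ᶠ x in nhds p, (∑ i, ξ i x * partialDeriv' m G i x) = 0

lemma partialDeriv'_analyticAt {m : ℕ} {G : (Fin m → ℂ) → ℂ} {p : Fin m → ℂ}
    (hG : AnalyticAt ℂ G p) (i : Fin m) : AnalyticAt ℂ (partialDeriv' m G i) p := by
  exact ((ContinuousLinearMap.apply ℂ ℂ (Pi.single i (1 : ℂ))).analyticAt _).comp hG.fderiv

section LastCoordinate

variable {n : ℕ} {G : (Fin (n + 1) → ℂ) → ℂ} {p : Fin (n + 1) → ℂ}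

/-- Near `p` one may divide by `∂ₘG`, so the relation `∑ ξᵢ ∂ᵢG = 0` can be solved for its last
term: `ξₘ = ∑_{i<m} (-ξᵢ / ∂ₘG) ∂ᵢG`. -/
lemma IsLocalRelation.exists_last_eq_sum (hG : AnalyticAt ℂ G p)
    (hlast : partialDeriv' (n + 1) G (Fin.last n) p ≠ 0)
    {ξ : Fin (n + 1) → (Fin (n + 1) → ℂ) → ℂ} (hξ : IsLocalRelation (n + 1) G p ξ) :
    ∃ a : Fin n → (Fin (n + 1) → ℂ) → ℂ, (∀ i, AnalyticAt ℂ (a i) p) ∧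
      ∀ᶠ x in nhds p,
        ξ (Fin.last n) x = ∑ i : Fin n, a i x * partialDeriv' (n + 1) G i.castSucc x := by
  set D := partialDeriv' (n + 1) G (Fin.last n)
  have hD : AnalyticAt ℂ D p := partialDeriv'_analyticAt hG _
  obtain ⟨hξ_an, hξ_rel⟩ := hξ
  refine ⟨fun i x => -ξ i.castSucc x / D x, fun i => (hξ_an _).neg.div hD hlast, ?_⟩
  filter_upwards [hξ_rel, hD.continuousAt.eventually_ne hlast] with x hrel hDx
  rw [Fin.sum_univ_castSucc, add_eq_zero_iff_neg_eq] at hrel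
  calc ξ (Fin.last n) x = (-∑ i : Fin n, ξ i.castSucc x * partialDeriv' (n + 1) G i.castSucc x)
        / D x := by rw [hrel, mul_div_cancel_right₀ _ hDx]
    _ = ∑ i : Fin n, -ξ i.castSucc x / D x * partialDeriv' (n + 1) G i.castSucc x := by
        rw [← Finset.sum_neg_distrib, Finset.sum_div]
        exact Finset.sum_congr rfl fun i _ => by ring

/-- Conversely, `h = ∑_{i<m} aᵢ ∂ᵢG` is the last component of the relation
`(-a₁ ∂ₘG, …, -aₘ₋₁ ∂ₘG, h)`. -/
lemma isLocalRelation_snoc (hG : AnalyticAt ℂ G p) {h : (Fin (n + 1) → ℂ) → ℂ}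
    (hh : AnalyticAt ℂ h p) {a : Fin n → (Fin (n + 1) → ℂ) → ℂ} (ha : ∀ i, AnalyticAt ℂ (a i) p)
    (hsum : ∀ᶠ x in nhds p,
      h x = ∑ i : Fin n, a i x * partialDeriv' (n + 1) G i.castSucc x) :
    IsLocalRelation (n + 1) G p
      (Fin.snoc (fun i x => -a i x * partialDeriv' (n + 1) G (Fin.last n) x) h) := by
  have hD := partialDeriv'_analyticAt hG (Fin.last n)
  refine ⟨Fin.lastCases (by simpa only [Fin.snoc_last] using hh)
    fun i => by rw [Fin.snoc_castSucc]; exact (ha i).neg.mul hD, ?_⟩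
  filter_upwards [hsum] with x hx
  rw [Fin.sum_univ_castSucc]
  simp only [Fin.snoc_castSucc, Fin.snoc_last, hx, Finset.sum_mul, ← Finset.sum_add_distrib]
  exact Finset.sum_eq_zero fun i _ => by ring

end LastCoordinate

/-- Local generators of the failure-of-transversality ideal `FT(π,G)`: if `∂ₘG(p) ≠ 0`
(the last variable being the deformation parameter `s`), then a function `h` analytic at
`p` agrees near `p` with the last component of a local relation for `G` at `p` iff, near
`p`, `h = ∑_{i<m} aᵢ·∂ᵢG` with the `aᵢ` analytic at `p`; that is, near `p` the ideal
`FT(π,G) = dπ(Der(−log G))` is generated by `∂₁G, …, ∂_{m−1}G`. -/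
theorem FT_locally_generated_by_partials {n : ℕ} (G : (Fin (n + 1) → ℂ) → ℂ)
    (p : Fin (n + 1) → ℂ) (hG : AnalyticAt ℂ G p)
    (hlast : partialDeriv' (n + 1) G (Fin.last n) p ≠ 0)
    (h : (Fin (n + 1) → ℂ) → ℂ) (hh : AnalyticAt ℂ h p) :
    (∃ ξ : Fin (n + 1) → (Fin (n + 1) → ℂ) → ℂ,
        IsLocalRelation (n + 1) G p ξ ∧ ∀ᶠ x in nhds p, ξ (Fin.last n) x = h x)
    ↔ (∃ a : Fin n → (Fin (n + 1) → ℂ) → ℂ, (∀ i, AnalyticAt ℂ (a i) p) ∧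
        ∀ᶠ x in nhds p,
          h x = ∑ i : Fin n, a i x * partialDeriv' (n + 1) G i.castSucc x) := by
  constructor
  · rintro ⟨ξ, hξ, hξh⟩
    obtain ⟨a, ha, hsum⟩ := hξ.exists_last_eq_sum hG hlast
    exact ⟨a, ha, by filter_upwards [hξh, hsum] with x hξx hx; rw [← hξx, hx]⟩
  · rintro ⟨a, ha, hsum⟩
    exact ⟨_, isLocalRelation_snoc hG hh ha hsum, Eventually.of_forall fun x => by
      simp only [Fin.snoc_last]⟩
end
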